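/- arXiv:2412.13122 — 3 statements merged into one kernel-verified Lean document; each statement's English description precedes it below -/
import Mathlib

section
/- Let n ≥ 1 and let a, b ∈ ℝ^{n×n} be symmetric real matrices with double-centerings A and B respectively. Then (1/n²) Σ_{k,l=1}^n A_{kl} B_{kl} = S₁ + S₂ − 2S₃, where S₁ = (1/n²) Σ_{k,l=1}^n a_{kl} b_{kl}, S₂ = ((1/n²) Σ_{k,l=1}^n a_{kl}) · ((1/n²) Σ_{k,l=1}^n b_{kl}), and S₃ = (1/n³) Σ_{k=1}^n Σ_{l,m=1}^n a_{kl} b_{km}. -/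
open Finset

/-- For symmetric `a, b ∈ ℝ^{n×n}` with double-centerings `A, B`,
`(1/n²) Σ A_{kl} B_{kl} = S₁ + S₂ − 2 S₃` where
`S₁ = (1/n²) Σ a_{kl} b_{kl}`,
`S₂ = ((1/n²) Σ a_{kl}) ((1/n²) Σ b_{kl})`,
`S₃ = (1/n³) Σ_k Σ_{l,m} a_{kl} b_{km}`. -/
theorem dcov_S1_S2_S3
    (n : ℕ) (hn : 1 ≤ n) (a b A B : Matrix (Fin n) (Fin n) ℝ)
    (ha : ∀ k l, a k l = a l k) (hb : ∀ k l, b k l = b l k)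
    (hA : ∀ k l, A k l =
      a k l - (1 / (n : ℝ)) * ∑ l', a k l'
            - (1 / (n : ℝ)) * ∑ k', a k' l
            + (1 / (n : ℝ) ^ 2) * ∑ k', ∑ l', a k' l')
    (hB : ∀ k l, B k l =
      b k l - (1 / (n : ℝ)) * ∑ l', b k l'
            - (1 / (n : ℝ)) * ∑ k', b k' l
            + (1 / (n : ℝ) ^ 2) * ∑ k', ∑ l', b k' l') :
    (1 / (n : ℝ) ^ 2) * ∑ k, ∑ l, A k l * B k l
      = (1 / (n : ℝ) ^ 2) * ∑ k, ∑ l, a k l * b k l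
        + ((1 / (n : ℝ) ^ 2) * ∑ k, ∑ l, a k l)
            * ((1 / (n : ℝ) ^ 2) * ∑ k, ∑ l, b k l)
        - 2 * ((1 / (n : ℝ) ^ 3) * ∑ k, ∑ l, ∑ m, a k l * b k m) := by
  have hn0 : (n : ℝ) ≠ 0 := by positivity
  set c : ℝ := 1 / (n : ℝ) with hc
  have hcola : ∀ l, ∑ k', a k' l = ∑ m, a l m :=
    fun l => Finset.sum_congr rfl fun k _ => ha k l
  have hcolb : ∀ l, ∑ k', b k' l = ∑ m, b l m :=
    fun l => Finset.sum_congr rfl fun k _ => hb k l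
  have hc2 : 1 / (n : ℝ) ^ 2 = c ^ 2 := by rw [hc]; ring
  have hA' : ∀ k l, A k l = a k l - c * (∑ m, a k m) - c * (∑ m, a l m)
      + c ^ 2 * ∑ p, ∑ q, a p q := by
    intro k l; rw [hA, hcola, hc2]
  have hB' : ∀ k l, B k l = b k l - c * (∑ m, b k m) - c * (∑ m, b l m)
      + c ^ 2 * ∑ p, ∑ q, b p q := by
    intro k l; rw [hB, hcolb, hc2]
  have htriple : ∑ k, ∑ l, ∑ m, a k l * b k m
      = ∑ k, (∑ l, a k l) * (∑ m, b k m) := by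
    refine Finset.sum_congr rfl fun k _ => ?_
    rw [Finset.sum_mul]
    refine Finset.sum_congr rfl fun l _ => ?_
    rw [Finset.mul_sum]
  have key : ∀ k l, A k l * B k l =
      a k l * b k l
      - c * (a k l * ∑ m, b k m) - c * (a k l * ∑ m, b l m)
      + (c ^ 2 * ∑ p, ∑ q, b p q) * a k l
      - c * ((∑ m, a k m) * b k l)
      + c ^ 2 * ((∑ m, a k m) * ∑ m, b k m)
      + c ^ 2 * ((∑ m, a k m) * ∑ m, b l m)
      - (c ^ 3 * ∑ p, ∑ q, b p q) * ∑ m, a k m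
      - c * ((∑ m, a l m) * b k l)
      + c ^ 2 * ((∑ m, a l m) * ∑ m, b k m)
      + c ^ 2 * ((∑ m, a l m) * ∑ m, b l m)
      - (c ^ 3 * ∑ p, ∑ q, b p q) * ∑ m, a l m
      + (c ^ 2 * ∑ p, ∑ q, a p q) * b k l
      - (c ^ 3 * ∑ p, ∑ q, a p q) * ∑ m, b k m
      - (c ^ 3 * ∑ p, ∑ q, a p q) * ∑ m, b l m
      + (c ^ 4 * (∑ p, ∑ q, a p q) * ∑ p, ∑ q, b p q) * (1 : ℝ) := by
    intro k l; rw [hA', hB']; ring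
  have F2 : ∑ k, ∑ l, c * (a k l * ∑ m, b k m)
      = c * ∑ k, (∑ l, a k l) * (∑ m, b k m) := by
    simp only [← Finset.mul_sum, ← Finset.sum_mul]
  have F3 : ∑ k, ∑ l, c * (a k l * ∑ m, b l m)
      = c * ∑ k, (∑ l, a k l) * (∑ m, b k m) := by
    rw [Finset.sum_comm]
    simp only [← Finset.mul_sum, ← Finset.sum_mul, hcola]
  have F4 : ∑ k, ∑ l, (c ^ 2 * ∑ p, ∑ q, b p q) * a k l
      = (c ^ 2 * ∑ p, ∑ q, b p q) * ∑ p, ∑ q, a p q := by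
    simp only [← Finset.mul_sum]
  have F5 : ∑ k, ∑ l, c * ((∑ m, a k m) * b k l)
      = c * ∑ k, (∑ l, a k l) * (∑ m, b k m) := by
    simp only [← Finset.mul_sum]
  have F6 : ∑ k, ∑ _l : Fin n, c ^ 2 * ((∑ m, a k m) * ∑ m, b k m)
      = c ^ 2 * (n : ℝ) * ∑ k, (∑ l, a k l) * (∑ m, b k m) := by
    simp only [Finset.sum_const, Finset.card_univ, Fintype.card_fin, nsmul_eq_mul]
    rw [Finset.mul_sum]
    exact Finset.sum_congr rfl fun k _ => by ring
  have F7 : ∑ k, ∑ l, c ^ 2 * ((∑ m, a k m) * ∑ m, b l m)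
      = c ^ 2 * ((∑ p, ∑ q, a p q) * ∑ p, ∑ q, b p q) := by
    simp only [← Finset.mul_sum, ← Finset.sum_mul]
  have F8 : ∑ k, ∑ _l : Fin n, (c ^ 3 * ∑ p, ∑ q, b p q) * ∑ m, a k m
      = (c ^ 3 * ∑ p, ∑ q, b p q) * (n : ℝ) * ∑ p, ∑ q, a p q := by
    simp only [Finset.sum_const, Finset.card_univ, Fintype.card_fin, nsmul_eq_mul]
    rw [Finset.sum_congr rfl fun k (_ : k ∈ (univ : Finset (Fin n))) =>
      (by ring : (n : ℝ) * ((c ^ 3 * ∑ p, ∑ q, b p q) * ∑ m, a k m)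
        = (c ^ 3 * ∑ p, ∑ q, b p q) * (n : ℝ) * ∑ m, a k m), ← Finset.mul_sum]
  have F9 : ∑ k, ∑ l, c * ((∑ m, a l m) * b k l)
      = c * ∑ k, (∑ l, a k l) * (∑ m, b k m) := by
    rw [Finset.sum_comm]
    simp only [← Finset.mul_sum, hcolb]
  have F10 : ∑ k, ∑ l, c ^ 2 * ((∑ m, a l m) * ∑ m, b k m)
      = c ^ 2 * ((∑ p, ∑ q, a p q) * ∑ p, ∑ q, b p q) := by
    simp only [← Finset.mul_sum, ← Finset.sum_mul]
  have F11 : ∑ _k : Fin n, ∑ l, c ^ 2 * ((∑ m, a l m) * ∑ m, b l m)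
      = c ^ 2 * (n : ℝ) * ∑ k, (∑ l, a k l) * (∑ m, b k m) := by
    simp only [← Finset.mul_sum, Finset.sum_const, Finset.card_univ,
      Fintype.card_fin, nsmul_eq_mul]
    ring
  have F12 : ∑ _k : Fin n, ∑ l, (c ^ 3 * ∑ p, ∑ q, b p q) * ∑ m, a l m
      = (c ^ 3 * ∑ p, ∑ q, b p q) * (n : ℝ) * ∑ p, ∑ q, a p q := by
    simp only [← Finset.mul_sum, Finset.sum_const, Finset.card_univ,
      Fintype.card_fin, nsmul_eq_mul]
    ring
  have F13 : ∑ k, ∑ l, (c ^ 2 * ∑ p, ∑ q, a p q) * b k l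
      = (c ^ 2 * ∑ p, ∑ q, a p q) * ∑ p, ∑ q, b p q := by
    simp only [← Finset.mul_sum]
  have F14 : ∑ k, ∑ _l : Fin n, (c ^ 3 * ∑ p, ∑ q, a p q) * ∑ m, b k m
      = (c ^ 3 * ∑ p, ∑ q, a p q) * (n : ℝ) * ∑ p, ∑ q, b p q := by
    simp only [Finset.sum_const, Finset.card_univ, Fintype.card_fin, nsmul_eq_mul]
    rw [Finset.sum_congr rfl fun k (_ : k ∈ (univ : Finset (Fin n))) =>
      (by ring : (n : ℝ) * ((c ^ 3 * ∑ p, ∑ q, a p q) * ∑ m, b k m)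
        = (c ^ 3 * ∑ p, ∑ q, a p q) * (n : ℝ) * ∑ m, b k m), ← Finset.mul_sum]
  have F15 : ∑ _k : Fin n, ∑ l, (c ^ 3 * ∑ p, ∑ q, a p q) * ∑ m, b l m
      = (c ^ 3 * ∑ p, ∑ q, a p q) * (n : ℝ) * ∑ p, ∑ q, b p q := by
    simp only [← Finset.mul_sum, Finset.sum_const, Finset.card_univ,
      Fintype.card_fin, nsmul_eq_mul]
    ring
  have F16 : ∑ (_ : Fin n), ∑ (_ : Fin n),
      (c ^ 4 * (∑ p, ∑ q, a p q) * ∑ p, ∑ q, b p q) * (1 : ℝ)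
      = (n : ℝ) ^ 2 * (c ^ 4 * (∑ p, ∑ q, a p q) * ∑ p, ∑ q, b p q) := by
    simp only [Finset.sum_const, Finset.card_univ, Fintype.card_fin, nsmul_eq_mul, mul_one]
    ring
  have main : ∑ k, ∑ l, A k l * B k l
      = (∑ k, ∑ l, a k l * b k l)
        - 2 * c * ∑ k, (∑ l, a k l) * (∑ m, b k m)
        + c ^ 2 * ((∑ p, ∑ q, a p q) * ∑ p, ∑ q, b p q) := by
    simp only [key]
    simp only [Finset.sum_add_distrib, Finset.sum_sub_distrib]
    rw [F2, F3, F4, F5, F6, F7, F8, F9, F10, F11, F12, F13, F14, F15, F16]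
    rw [hc]
    field_simp
    ring
  rw [main, htriple, hc]
  ring
end

section
/- Let H be a real inner product space, x₁,…,x_n points of a normed space, and Y₁,…,Y_n ∈ 𝒴 with feature vectors φ(Y₁),…,φ(Y_n) ∈ H. Let K ∈ ℝ^{n×n} be the Gram matrix K_{ij} = ⟨φ(Y_i), φ(Y_j)⟩ and let M be a symmetric matrix with M² = K. Then the empirical kernel distance covariance computed with b_{kl} = ‖φ(Y_k) − φ(Y_l)‖ equals the empirical distance covariance computed with the columns of M as responses: letting A be the double-centering of a_{kl} = ‖x_k − x_l‖, B the double-centering of b_{kl} = ‖φ(Y_k) − φ(Y_l)‖, and B̃ the double-centering of b̃_{kl} = ‖M(:,k) − M(:,l)‖₂, one has B = B̃ and hence (1/n²) Σ_{k,l=1}^n A_{kl} B_{kl} = (1/n²) Σ_{k,l=1}^n A_{kl} B̃_{kl}. -/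
/-!
Double-centering only sees the matrix `b`, so it suffices that `b = b̃` entrywise. The squared
distance between two vectors is determined by their Gram matrix, and the columns of `M`, as vectors
of `ℝⁿ`, have Gram matrix `Mᵀ M = M M = K`, the Gram matrix of the feature vectors `φ (Y i)`.
-/

open Finset
open scoped Matrix

theorem Matrix.gram_toLp_transpose {m n : Type*} [Fintype m] (M : Matrix m n ℝ) :
    gram ℝ (fun k ↦ WithLp.toLp 2 (Mᵀ k)) = Mᵀ * M := by
  ext k l
  simp [EuclideanSpace.inner_toLp_toLp, mul_apply, dotProduct, mul_comm]

theorem norm_sub_eq_norm_sub_of_gram_eq {ι E F : Type*}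
    [NormedAddCommGroup E] [InnerProductSpace ℝ E] [NormedAddCommGroup F] [InnerProductSpace ℝ F]
    {v : ι → E} {w : ι → F} (h : Matrix.gram ℝ v = Matrix.gram ℝ w) (k l : ι) :
    ‖v k - v l‖ = ‖w k - w l‖ := by
  have hvw (i j : ι) : inner ℝ (v i) (v j) = inner ℝ (w i) (w j) := congr_fun₂ h i j
  refine (sq_eq_sq₀ (norm_nonneg _) (norm_nonneg _)).1 ?_
  simp only [← real_inner_self_eq_norm_sq, inner_sub_left, inner_sub_right, hvw]

theorem EuclideanSpace.norm_toLp_sub_toLp {n : Type*} [Fintype n] (x y : n → ℝ) :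
    ‖WithLp.toLp 2 x - WithLp.toLp 2 y‖ = √(∑ i, (x i - y i) ^ 2) := by
  rw [← dist_eq_norm, EuclideanSpace.dist_eq]
  simp [Real.dist_eq, sq_abs]

theorem kdcov_eq_dcov_of_sqrt_gram_general
    {H 𝒴 : Type*}
    [NormedAddCommGroup H] [InnerProductSpace ℝ H]
    (n : ℕ) (Y : Fin n → 𝒴) (φ : 𝒴 → H)
    (K M : Matrix (Fin n) (Fin n) ℝ)
    (hK : ∀ i j, K i j = (inner ℝ (φ (Y i)) (φ (Y j)) : ℝ))
    (hM : M.IsSymm) (hMsq : M * M = K)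
    (b bt A B Bt : Matrix (Fin n) (Fin n) ℝ)
    (hbb : ∀ k l, b k l = ‖φ (Y k) - φ (Y l)‖)
    (hbt : ∀ k l, bt k l = Real.sqrt (∑ i, (M i k - M i l) ^ 2))
    (hB : ∀ k l, B k l =
      b k l - (1 / (n : ℝ)) * ∑ l', b k l'
            - (1 / (n : ℝ)) * ∑ k', b k' l
            + (1 / (n : ℝ) ^ 2) * ∑ k', ∑ l', b k' l')
    (hBt : ∀ k l, Bt k l =
      bt k l - (1 / (n : ℝ)) * ∑ l', bt k l'
             - (1 / (n : ℝ)) * ∑ k', bt k' l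
             + (1 / (n : ℝ) ^ 2) * ∑ k', ∑ l', bt k' l') :
    B = Bt ∧
      (1 / (n : ℝ) ^ 2) * ∑ k, ∑ l, A k l * B k l
        = (1 / (n : ℝ) ^ 2) * ∑ k, ∑ l, A k l * Bt k l := by
  have hgram : Matrix.gram ℝ (φ ∘ Y) = Matrix.gram ℝ (fun k ↦ WithLp.toLp 2 (Mᵀ k)) := by
    rw [Matrix.gram_toLp_transpose, hM.eq, hMsq]
    ext i j
    exact (hK i j).symm
  have hb : b = bt := by
    ext k l
    rw [hbb, hbt, ← EuclideanSpace.norm_toLp_sub_toLp]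
    exact norm_sub_eq_norm_sub_of_gram_eq hgram k l
  have hBBt : B = Bt := by
    ext k l
    rw [hB, hBt, hb]
  exact ⟨hBBt, by rw [hBBt]⟩

/-- The empirical kernel distance covariance computed with
`b_{kl} = ‖φ(Y_k) − φ(Y_l)‖` equals the empirical distance covariance computed
with the columns of a symmetric square root `M` of the Gram matrix
`K_{ij} = ⟨φ(Y_i), φ(Y_j)⟩` as responses: the double-centerings satisfy
`B = B̃` and hence `(1/n²) Σ A_{kl} B_{kl} = (1/n²) Σ A_{kl} B̃_{kl}`. -/
theorem kdcov_eq_dcov_of_sqrt_gram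
    {E H 𝒴 : Type*} [NormedAddCommGroup E]
    [NormedAddCommGroup H] [InnerProductSpace ℝ H]
    (n : ℕ) (hn : 1 ≤ n) (x : Fin n → E) (Y : Fin n → 𝒴) (φ : 𝒴 → H)
    (K M : Matrix (Fin n) (Fin n) ℝ)
    (hK : ∀ i j, K i j = (inner ℝ (φ (Y i)) (φ (Y j)) : ℝ))
    (hM : M.IsSymm) (hMsq : M * M = K)
    (a b bt A B Bt : Matrix (Fin n) (Fin n) ℝ)
    (hab : ∀ k l, a k l = ‖x k - x l‖)
    (hbb : ∀ k l, b k l = ‖φ (Y k) - φ (Y l)‖)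
    (hbt : ∀ k l, bt k l = Real.sqrt (∑ i, (M i k - M i l) ^ 2))
    (hA : ∀ k l, A k l =
      a k l - (1 / (n : ℝ)) * ∑ l', a k l'
            - (1 / (n : ℝ)) * ∑ k', a k' l
            + (1 / (n : ℝ) ^ 2) * ∑ k', ∑ l', a k' l')
    (hB : ∀ k l, B k l =
      b k l - (1 / (n : ℝ)) * ∑ l', b k l'
            - (1 / (n : ℝ)) * ∑ k', b k' l
            + (1 / (n : ℝ) ^ 2) * ∑ k', ∑ l', b k' l')
    (hBt : ∀ k l, Bt k l =
      bt k l - (1 / (n : ℝ)) * ∑ l', bt k l'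
             - (1 / (n : ℝ)) * ∑ k', bt k' l
             + (1 / (n : ℝ) ^ 2) * ∑ k', ∑ l', bt k' l') :
    B = Bt ∧
      (1 / (n : ℝ) ^ 2) * ∑ k, ∑ l, A k l * B k l
        = (1 / (n : ℝ) ^ 2) * ∑ k, ∑ l, A k l * Bt k l :=
  kdcov_eq_dcov_of_sqrt_gram_general n Y φ K M hK hM hMsq b bt A B Bt hbb hbt hB hBt
end

section
/- Let 0 < α ≤ 2, let x₁,…,x_n ∈ ℝᵖ and y₁,…,y_n ∈ ℝ^q, and set a_{kl} = ‖x_k − x_l‖₂^α and b_{kl} = ‖y_k − y_l‖₂^α for k, l ∈ {1,…,n}, with double-centerings A and B. Then the empirical α-distance covariance is nonnegative: (1/n²) Σ_{k,l=1}^n A_{kl} B_{kl} ≥ 0. -/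
/-!
Write `J = 1 - 𝟙𝟙ᵀ / n`, so that the double-centering of `a` is `J a J` and
`cᵀ (J a J) c = (J c)ᵀ a (J c)` with `∑ₖ (J c)ₖ = 0`. For `0 < α ≤ 2` the kernel `‖x - y‖ ^ α` is
conditionally negative definite: for `α = 2`, `∑ c_k c_l ‖x_k - x_l‖² = -2 ‖∑ c_k x_k‖²`; for
`α < 2`, `r ^ α` is a positive multiple of `∫₀^∞ (1 - exp (-t r²)) t ^ (-α/2 - 1) dt`, and the
Gaussian kernels `exp (-t ‖x - y‖²)` are positive semidefinite, being (up to a diagonal scaling)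
a series in the Hadamard powers of the Gram matrix. Hence `-A` and `-B` are positive
semidefinite, and by the Schur product theorem so is their Hadamard product, whose entry sum is
`∑ A_kl B_kl`.
-/

open Finset Matrix Real MeasureTheory Set

section QuadraticForm
variable {ι : Type*} [Fintype ι]

theorem Matrix.dotProduct_mulVec_self_eq_sum {R : Type*} [CommSemiring R] (M : Matrix ι ι R)
    (c : ι → R) : c ⬝ᵥ M *ᵥ c = ∑ k, ∑ l, c k * c l * M k l := by
  simp only [dotProduct, mulVec, mul_sum]
  exact sum_congr rfl fun k _ => sum_congr rfl fun l _ => by ring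

theorem Matrix.posSemidef_iff_sum_mul_mul_nonneg {M : Matrix ι ι ℝ} :
    M.PosSemidef ↔ M.IsHermitian ∧ ∀ c : ι → ℝ, 0 ≤ ∑ k, ∑ l, c k * c l * M k l := by
  simp [posSemidef_iff_dotProduct_mulVec, dotProduct_mulVec_self_eq_sum]

theorem Matrix.PosSemidef.sum_sum_mul_nonneg {A B : Matrix ι ι ℝ}
    (hA : A.PosSemidef) (hB : B.PosSemidef) : 0 ≤ ∑ k, ∑ l, A k l * B k l := by
  simpa [hadamard_apply] using (posSemidef_iff_sum_mul_mul_nonneg.1 (hA.hadamard hB)).2 1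

end QuadraticForm

section Gaussian
variable {ι E : Type*} [Fintype ι] [NormedAddCommGroup E] [InnerProductSpace ℝ E]

theorem posSemidef_inner_pow (x : ι → E) (m : ℕ) :
    (of fun k l => inner ℝ (x k) (x l) ^ m).PosSemidef := by
  induction m with
  | zero =>
    have h : (of fun k l => inner ℝ (x k) (x l) ^ 0) = vecMulVec 1 (star 1) := by
      ext k l; simp [vecMulVec_apply]
    rw [h]
    exact posSemidef_vecMulVec_self_star 1
  | succ m ih =>
    have h : (of fun k l => inner ℝ (x k) (x l) ^ (m + 1))
        = (of fun k l => inner ℝ (x k) (x l) ^ m) ⊙ gram ℝ x := by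
      ext k l; simp [gram_apply, pow_succ]
    rw [h]
    exact ih.hadamard (posSemidef_gram ℝ x)

theorem posSemidef_exp_mul_inner (x : ι → E) {s : ℝ} (hs : 0 ≤ s) :
    (of fun k l => exp (s * inner ℝ (x k) (x l))).PosSemidef := by
  refine posSemidef_iff_sum_mul_mul_nonneg.2 ⟨?_, fun c => ?_⟩
  · ext k l
    simp [real_inner_comm]
  have hseries : ∀ r : ℝ, HasSum (fun m : ℕ => r ^ m / m.factorial) (exp r) := fun r => by
    simpa [← exp_eq_exp_ℝ] using NormedSpace.expSeries_div_hasSum_exp r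
  have hsum := hasSum_sum (s := univ) fun k _ => hasSum_sum (s := univ) fun l _ =>
    (hseries (s * inner ℝ (x k) (x l))).mul_left (c k * c l)
  refine hsum.nonneg fun m => ?_
  have hm := (posSemidef_iff_sum_mul_mul_nonneg.1 (posSemidef_inner_pow x m)).2 c
  calc (0 : ℝ) ≤ s ^ m / m.factorial * ∑ k, ∑ l, c k * c l * inner ℝ (x k) (x l) ^ m := by
        simp only [of_apply] at hm
        positivity
    _ = _ := by
        simp only [mul_sum]
        exact sum_congr rfl fun k _ => sum_congr rfl fun l _ => by ring

theorem posSemidef_exp_neg_mul_norm_sub_sq (x : ι → E) {t : ℝ} (ht : 0 ≤ t) :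
    (of fun k l => exp (-(t * ‖x k - x l‖ ^ 2))).PosSemidef := by
  classical
  have h := (posSemidef_exp_mul_inner x (by positivity : 0 ≤ 2 * t)).conjTranspose_mul_mul_same
    (diagonal fun k => exp (-(t * ‖x k‖ ^ 2)))
  convert h using 1
  ext k l
  simp only [of_apply, diagonal_conjTranspose, diagonal_mul, mul_diagonal, star_trivial]
  rw [norm_sub_sq_real, ← exp_add, ← exp_add]
  ring_nf

section Integral
variable {β : ℝ}

theorem integrableOn_one_sub_exp_neg_mul_rpow (hβ0 : 0 < β) (hβ1 : β < 1) {r : ℝ} (hr : 0 ≤ r) :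
    IntegrableOn (fun t : ℝ => (1 - exp (-(r * t))) * t ^ (-β - 1)) (Ioi 0) := by
  have hf : ContinuousOn (fun t : ℝ => (1 - exp (-(r * t))) * t ^ (-β - 1)) (Ioi 0) :=
    ContinuousOn.mul (by fun_prop) fun t ht =>
      (continuousAt_rpow_const t _ (Or.inl (ne_of_gt ht))).continuousWithinAt
  have hexp_le : ∀ t, 0 ≤ t → 0 ≤ 1 - exp (-(r * t)) := fun t ht => by
    simp only [sub_nonneg, exp_le_one_iff, neg_nonpos]; positivity
  rw [← Ioc_union_Ioi_eq_Ioi zero_le_one]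
  refine IntegrableOn.union ?_ ?_
  · -- `1 - exp (-s) ≤ s` bounds the integrand by `r * t ^ (-β)`
    have hint : IntegrableOn (fun t : ℝ => r * t ^ (-β)) (Ioc 0 1) := by
      have := intervalIntegral.intervalIntegrable_rpow' (a := 0) (b := 1) (r := -β) (by linarith)
      exact ((intervalIntegrable_iff_integrableOn_Ioc_of_le zero_le_one).1 this).const_mul r
    refine hint.mono' ((hf.mono Ioc_subset_Ioi_self).aestronglyMeasurable measurableSet_Ioc)
      ((ae_restrict_iff' measurableSet_Ioc).2 (Filter.Eventually.of_forall fun t ht => ?_))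
    have ht0 : 0 < t := ht.1
    rw [norm_of_nonneg (mul_nonneg (hexp_le t ht0.le) (rpow_nonneg ht0.le _))]
    calc (1 - exp (-(r * t))) * t ^ (-β - 1) ≤ r * t * t ^ (-β - 1) := by
          gcongr
          linarith [add_one_le_exp (-(r * t))]
      _ = r * t ^ (-β) := by
          rw [mul_assoc, ← rpow_one_add' ht0.le (by linarith)]
          ring_nf
  · refine (integrableOn_Ioi_rpow_of_lt (by linarith : -β - 1 < -1) one_pos).mono'
      ((hf.mono (Ioi_subset_Ioi zero_le_one)).aestronglyMeasurable measurableSet_Ioi)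
      ((ae_restrict_iff' measurableSet_Ioi).2 (Filter.Eventually.of_forall fun t ht => ?_))
    have ht0 : 0 < t := zero_lt_one.trans ht
    rw [norm_of_nonneg (mul_nonneg (hexp_le t ht0.le) (rpow_nonneg ht0.le _))]
    exact mul_le_of_le_one_left (rpow_nonneg ht0.le _) (by linarith [exp_pos (-(r * t))])

theorem integral_one_sub_exp_neg_mul_rpow_pos (hβ0 : 0 < β) (hβ1 : β < 1) :
    0 < ∫ t in Ioi (0 : ℝ), (1 - exp (-t)) * t ^ (-β - 1) := by
  have hpos : ∀ t ∈ Ioi (0 : ℝ), 0 < (1 - exp (-t)) * t ^ (-β - 1) := fun t ht =>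
    mul_pos (by simpa using ht) (rpow_pos_of_pos ht _)
  rw [setIntegral_pos_iff_support_of_nonneg_ae
    ((ae_restrict_iff' measurableSet_Ioi).2
      (Filter.Eventually.of_forall fun t ht => (hpos t ht).le))
    (by simpa using integrableOn_one_sub_exp_neg_mul_rpow hβ0 hβ1 zero_le_one),
    inter_eq_self_of_subset_right (show Ioi (0 : ℝ) ⊆ Function.support _ from
      fun t ht => (hpos t ht).ne')]
  simp

theorem integral_one_sub_exp_neg_mul_rpow (hβ : β ≠ 0) {r : ℝ} (hr : 0 ≤ r) :
    ∫ t in Ioi (0 : ℝ), (1 - exp (-(r * t))) * t ^ (-β - 1)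
      = r ^ β * ∫ t in Ioi (0 : ℝ), (1 - exp (-t)) * t ^ (-β - 1) := by
  rcases hr.eq_or_lt with rfl | hr
  · simp [zero_rpow hβ]
  have hsubst := integral_comp_mul_left_Ioi (fun t => (1 - exp (-t)) * t ^ (-β - 1)) 0 hr
  rw [mul_zero, smul_eq_mul] at hsubst
  calc ∫ t in Ioi (0 : ℝ), (1 - exp (-(r * t))) * t ^ (-β - 1)
      = ∫ t in Ioi (0 : ℝ), r ^ (β + 1) * ((1 - exp (-(r * t))) * (r * t) ^ (-β - 1)) := by
        refine setIntegral_congr_fun measurableSet_Ioi fun t ht => ?_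
        rw [mul_rpow hr.le (le_of_lt ht), mul_left_comm, ← mul_assoc (r ^ (β + 1)),
          ← rpow_add hr]
        simp
    _ = r ^ β * ∫ t in Ioi (0 : ℝ), (1 - exp (-t)) * t ^ (-β - 1) := by
        rw [integral_const_mul, hsubst, ← mul_assoc, ← rpow_neg_one, ← rpow_add hr]
        ring_nf

end Integral

section NegativeType
variable {ι E : Type*} [Fintype ι] [NormedAddCommGroup E] [InnerProductSpace ℝ E]

theorem sum_mul_mul_norm_sub_sq (x : ι → E) {c : ι → ℝ} (hc : ∑ k, c k = 0) :
    ∑ k, ∑ l, c k * c l * ‖x k - x l‖ ^ 2 = -2 * ‖∑ k, c k • x k‖ ^ 2 := by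
  have hsq : ‖∑ k, c k • x k‖ ^ 2 = ∑ k, ∑ l, c k * c l * inner ℝ (x k) (x l) := by
    rw [← real_inner_self_eq_norm_sq, sum_inner]
    simp only [inner_sum, real_inner_smul_left, real_inner_smul_right]
    exact sum_congr rfl fun k _ => sum_congr rfl fun l _ => by ring
  have hexpand : ∀ k l, c k * c l * ‖x k - x l‖ ^ 2 = c l * (c k * ‖x k‖ ^ 2)
      - 2 * (c k * c l * inner ℝ (x k) (x l)) + c k * (c l * ‖x l‖ ^ 2) := fun k l => by
    rw [norm_sub_sq_real]; ring
  simp only [hexpand, hsq, sum_add_distrib, sum_sub_distrib, ← sum_mul, ← mul_sum, hc]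
  ring

theorem sum_mul_mul_norm_sub_rpow_nonpos_of_lt_two {α : ℝ} (hα0 : 0 < α) (hα2 : α < 2)
    (x : ι → E) {c : ι → ℝ} (hc : ∑ k, c k = 0) :
    ∑ k, ∑ l, c k * c l * ‖x k - x l‖ ^ α ≤ 0 := by
  set β := α / 2 with hβ
  have hβ0 : 0 < β := by positivity
  have hβ1 : β < 1 := by linarith
  have hnorm : ∀ k l, ‖x k - x l‖ ^ α = (‖x k - x l‖ ^ 2) ^ β := fun k l => by
    rw [← rpow_natCast, ← rpow_mul (norm_nonneg _), hβ]
    ring_nf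
  set I := ∫ t in Ioi (0 : ℝ), (1 - exp (-t)) * t ^ (-β - 1)
  refine nonpos_of_mul_nonpos_left ?_ (integral_one_sub_exp_neg_mul_rpow_pos hβ0 hβ1)
  have hrep : ∀ k l, c k * c l * ‖x k - x l‖ ^ α * I = ∫ t in Ioi (0 : ℝ),
      c k * c l * ((1 - exp (-(‖x k - x l‖ ^ 2 * t))) * t ^ (-β - 1)) := fun k l => by
    rw [integral_const_mul, integral_one_sub_exp_neg_mul_rpow hβ0.ne' (by positivity), hnorm]
    ring
  have hint : ∀ k l, IntegrableOn
      (fun t => c k * c l * ((1 - exp (-(‖x k - x l‖ ^ 2 * t))) * t ^ (-β - 1))) (Ioi 0) :=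
    fun k l => (integrableOn_one_sub_exp_neg_mul_rpow hβ0 hβ1 (by positivity)).const_mul _
  calc (∑ k, ∑ l, c k * c l * ‖x k - x l‖ ^ α) * I
      = ∫ t in Ioi (0 : ℝ), ∑ k, ∑ l,
          c k * c l * ((1 - exp (-(‖x k - x l‖ ^ 2 * t))) * t ^ (-β - 1)) := by
        simp_rw [sum_mul, hrep]
        rw [integral_finsetSum _ fun k _ => integrable_finsetSum _ fun l _ => hint k l]
        exact sum_congr rfl fun k _ => (integral_finsetSum _ fun l _ => hint k l).symm
    _ ≤ 0 := by
        refine setIntegral_nonpos measurableSet_Ioi fun t ht => ?_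
        have hgauss := (posSemidef_iff_sum_mul_mul_nonneg.1
          (posSemidef_exp_neg_mul_norm_sub_sq x (le_of_lt ht))).2 c
        simp only [of_apply] at hgauss
        have hsplit : ∀ k l, c k * c l * ((1 - exp (-(‖x k - x l‖ ^ 2 * t))) * t ^ (-β - 1))
            = c k * c l * t ^ (-β - 1)
              - c k * c l * exp (-(t * ‖x k - x l‖ ^ 2)) * t ^ (-β - 1) := fun k l => by
          rw [mul_comm t]; ring
        simp only [hsplit, sum_sub_distrib, ← sum_mul, ← mul_sum, hc, mul_zero, zero_mul,
          zero_sub, sum_neg_distrib, neg_nonpos]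
        exact mul_nonneg hgauss (rpow_nonneg (le_of_lt ht) _)

theorem sum_mul_mul_norm_sub_rpow_nonpos {α : ℝ} (hα0 : 0 < α) (hα2 : α ≤ 2)
    (x : ι → E) {c : ι → ℝ} (hc : ∑ k, c k = 0) :
    ∑ k, ∑ l, c k * c l * ‖x k - x l‖ ^ α ≤ 0 := by
  rcases hα2.lt_or_eq with hα2 | rfl
  · exact sum_mul_mul_norm_sub_rpow_nonpos_of_lt_two hα0 hα2 x hc
  · simp only [rpow_two, sum_mul_mul_norm_sub_sq x hc]
    nlinarith [sq_nonneg ‖∑ k, c k • x k‖]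

end NegativeType

section DoubleCentering
variable {ι : Type*} [Fintype ι] [DecidableEq ι]

variable (ι) in
noncomputable def Matrix.centeringMatrix : Matrix ι ι ℝ :=
  1 - (1 / (Fintype.card ι : ℝ)) • of fun _ _ => 1

noncomputable def Matrix.doubleCenter (a : Matrix ι ι ℝ) : Matrix ι ι ℝ :=
  centeringMatrix ι * a * centeringMatrix ι

theorem Matrix.isSymm_centeringMatrix : (centeringMatrix ι).IsSymm := by
  ext k l
  simp [centeringMatrix, one_apply, eq_comm]

theorem Matrix.centeringMatrix_mulVec (v : ι → ℝ) (k : ι) :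
    (centeringMatrix ι *ᵥ v) k = v k - (1 / (Fintype.card ι : ℝ)) * ∑ l, v l := by
  simp [centeringMatrix, mulVec, dotProduct, sub_mul, sum_sub_distrib, one_apply, ← mul_sum]

theorem Matrix.sum_centeringMatrix_mulVec (v : ι → ℝ) : ∑ k, (centeringMatrix ι *ᵥ v) k = 0 := by
  cases isEmpty_or_nonempty ι
  · simp
  simp [centeringMatrix_mulVec, sum_sub_distrib]

theorem Matrix.doubleCenter_apply (a : Matrix ι ι ℝ) (k l : ι) :
    a.doubleCenter k l = a k l - (1 / (Fintype.card ι : ℝ)) * ∑ l', a k l'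
      - (1 / (Fintype.card ι : ℝ)) * ∑ k', a k' l
      + (1 / (Fintype.card ι : ℝ) ^ 2) * ∑ k', ∑ l', a k' l' := by
  simp only [doubleCenter, centeringMatrix, one_div, smul_of, sub_mul, one_mul, mul_apply,
    sub_apply, of_apply, Pi.smul_apply, smul_eq_mul, mul_one, one_apply, mul_sub, mul_ite, mul_zero,
    sum_mul, sum_sub_distrib, sum_ite_eq', Finset.mem_univ, ↓reduceIte, mul_sum]
  simp only [← mul_sum, ← sum_mul]
  rw [sum_comm (f := fun i j => a i j)]
  ring

theorem Matrix.posSemidef_neg_doubleCenter {a : Matrix ι ι ℝ} (ha : a.IsHermitian)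
    (hneg : ∀ c : ι → ℝ, ∑ k, c k = 0 → ∑ k, ∑ l, c k * c l * a k l ≤ 0) :
    (-a.doubleCenter).PosSemidef := by
  refine posSemidef_iff_dotProduct_mulVec.2 ⟨?_, fun v => ?_⟩
  · have h := isHermitian_conjTranspose_mul_mul (centeringMatrix ι) ha
    rw [conjTranspose_eq_transpose_of_trivial, isSymm_centeringMatrix.eq] at h
    exact h.neg
  · have hq := hneg _ (sum_centeringMatrix_mulVec v)
    rw [← dotProduct_mulVec_self_eq_sum] at hq
    have : star v ⬝ᵥ -a.doubleCenter *ᵥ v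
        = -((centeringMatrix ι *ᵥ v) ⬝ᵥ a *ᵥ (centeringMatrix ι *ᵥ v)) := by
      rw [doubleCenter, neg_mulVec, dotProduct_neg, ← mulVec_mulVec, ← mulVec_mulVec,
        dotProduct_mulVec, star_trivial, ← mulVec_transpose, isSymm_centeringMatrix.eq]
    rw [this]
    exact neg_nonneg.2 hq

theorem posSemidef_neg_doubleCenter_norm_sub_rpow {E : Type*} [NormedAddCommGroup E]
    [InnerProductSpace ℝ E] {α : ℝ} (hα0 : 0 < α) (hα2 : α ≤ 2)
    (x : ι → E) : (-(of fun k l => ‖x k - x l‖ ^ α).doubleCenter).PosSemidef :=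
  posSemidef_neg_doubleCenter (by ext k l; simp [norm_sub_rev])
    fun c hc => by simpa using sum_mul_mul_norm_sub_rpow_nonpos hα0 hα2 x hc

end DoubleCentering

/-- For `0 < α ≤ 2`, points `x₁,…,x_n ∈ ℝᵖ`, `y₁,…,y_n ∈ ℝ^q`,
distance matrices `a_{kl} = ‖x_k − x_l‖₂^α`, `b_{kl} = ‖y_k − y_l‖₂^α` with
double-centerings `A, B`, the empirical α-distance covariance is nonnegative:
`(1/n²) Σ_{k,l} A_{kl} B_{kl} ≥ 0`. -/
theorem empirical_alpha_dcov_nonneg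
    (α : ℝ) (hα0 : 0 < α) (hα2 : α ≤ 2)
    (n p q : ℕ)
    (x : Fin n → EuclideanSpace ℝ (Fin p)) (y : Fin n → EuclideanSpace ℝ (Fin q))
    (a b A B : Matrix (Fin n) (Fin n) ℝ)
    (hab : ∀ k l, a k l = ‖x k - x l‖ ^ α)
    (hbb : ∀ k l, b k l = ‖y k - y l‖ ^ α)
    (hA : ∀ k l, A k l =
      a k l - (1 / (n : ℝ)) * ∑ l', a k l'
            - (1 / (n : ℝ)) * ∑ k', a k' l
            + (1 / (n : ℝ) ^ 2) * ∑ k', ∑ l', a k' l')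
    (hB : ∀ k l, B k l =
      b k l - (1 / (n : ℝ)) * ∑ l', b k l'
            - (1 / (n : ℝ)) * ∑ k', b k' l
            + (1 / (n : ℝ) ^ 2) * ∑ k', ∑ l', b k' l') :
    0 ≤ (1 / (n : ℝ) ^ 2) * ∑ k, ∑ l, A k l * B k l := by
  have hA' : A = a.doubleCenter := by ext k l; rw [hA, doubleCenter_apply, Fintype.card_fin]
  have hB' : B = b.doubleCenter := by ext k l; rw [hB, doubleCenter_apply, Fintype.card_fin]
  have ha : a = of fun k l => ‖x k - x l‖ ^ α := ext hab
  have hb : b = of fun k l => ‖y k - y l‖ ^ α := ext hbb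
  have hAB := (posSemidef_neg_doubleCenter_norm_sub_rpow hα0 hα2 x).sum_sum_mul_nonneg
    (posSemidef_neg_doubleCenter_norm_sub_rpow hα0 hα2 y)
  rw [← ha, ← hb, ← hA', ← hB'] at hAB
  simp only [Matrix.neg_apply, neg_mul_neg] at hAB
  exact mul_nonneg (by positivity) hAB
end Gaussian
end
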